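/- Let K be a nonzero real M×N matrix with singular values σ₁, ..., σ_Q (Q = min(M,N)), and define p_i = σ_i / Σ_j σ_j. The effective rank eRank(K) = exp(−Σ_i p_i log p_i) satisfies 1 ≤ eRank(K) ≤ rank(K), with eRank(K) = rank(K) if and only if all nonzero singular values of K are equal. -/

import Mathlib

/-!
Put `p = σ / ∑ σ`. Then `eRank K = exp H` with `H = ∑ negMulLog pᵢ`, and `H ≥ 0` because
`0 ≤ pᵢ ≤ 1`. The zero singular values contribute nothing to `H`, and the nonzero ones are
indexed by a set `T` with `#T = rank (KᴴK) = rank K`. Jensen's inequality for the strictly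
concave function `negMulLog` with uniform weights on `T` gives
`H / #T ≤ negMulLog (1 / #T) = log #T / #T`, with equality iff `p` is constant on `T`.
-/

open Matrix

/-- The singular values of a real matrix `K`: square roots of the eigenvalues of `KᴴK`
(possibly padded with zeros, which do not affect the effective rank). -/
noncomputable def svals {M N : ℕ} (K : Matrix (Fin M) (Fin N) ℝ) : Fin N → ℝ :=
  fun i => Real.sqrt ((Matrix.isHermitian_conjTranspose_mul_self K).eigenvalues i)

/-- The effective rank: the exponential of the Shannon entropy of the normalized
singular value distribution (with the convention `0 · log 0 = 0`, which holds
automatically since `Real.log 0 = 0`). -/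
noncomputable def eRank {M N : ℕ} (K : Matrix (Fin M) (Fin N) ℝ) : ℝ :=
  Real.exp (-∑ i, (svals K i / ∑ j, svals K j) * Real.log (svals K i / ∑ j, svals K j))

open Finset

namespace Real

section ProbabilityVector

variable {ι : Type*} {s : Finset ι} {p : ι → ℝ}

theorem negMulLog_inv (x : ℝ) : negMulLog x⁻¹ = x⁻¹ * log x := by
  simp [negMulLog, log_inv]

theorem negMulLog_sum_card_inv_smul (h1 : ∑ i ∈ s, p i = 1) :
    negMulLog (∑ i ∈ s, (#s : ℝ)⁻¹ • p i) = (#s : ℝ)⁻¹ * log #s := by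
  rw [← smul_sum, h1, smul_eq_mul, mul_one, negMulLog_inv]

theorem sum_negMulLog_le_log_card (h0 : ∀ i ∈ s, 0 ≤ p i) (h1 : ∑ i ∈ s, p i = 1) :
    ∑ i ∈ s, negMulLog (p i) ≤ log #s := by
  have hs : s.Nonempty := nonempty_of_sum_ne_zero (h1 ▸ one_ne_zero)
  have hpos : 0 < (#s : ℝ)⁻¹ := by positivity
  have := concaveOn_negMulLog.le_map_sum (fun _ _ ↦ hpos.le) (by simp [hs.card_ne_zero]) h0
  rw [negMulLog_sum_card_inv_smul h1, ← smul_sum, smul_eq_mul] at this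
  exact le_of_mul_le_mul_left this hpos

theorem sum_negMulLog_eq_log_card_iff (h0 : ∀ i ∈ s, 0 ≤ p i) (h1 : ∑ i ∈ s, p i = 1) :
    ∑ i ∈ s, negMulLog (p i) = log #s ↔ ∀ i ∈ s, ∀ j ∈ s, p i = p j := by
  have hs : s.Nonempty := nonempty_of_sum_ne_zero (h1 ▸ one_ne_zero)
  have hpos : 0 < (#s : ℝ)⁻¹ := by positivity
  have := strictConcaveOn_negMulLog.map_sum_eq_iff_of_pos (fun _ _ ↦ hpos)
    (by simp [hs.card_ne_zero]) h0
  rwa [negMulLog_sum_card_inv_smul h1, ← smul_sum, smul_eq_mul, mul_right_inj' hpos.ne',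
    eq_comm] at this

end ProbabilityVector

section Weights

variable {ι : Type*} [Fintype ι] {w : ι → ℝ}

theorem sum_negMulLog_div_sum_nonneg (hw : 0 ≤ w) :
    0 ≤ ∑ i, negMulLog (w i / ∑ j, w j) :=
  sum_nonneg fun i _ ↦ negMulLog_nonneg (div_nonneg (hw i) (Fintype.sum_nonneg hw))
    (div_le_one_of_le₀ (single_le_sum (fun j _ ↦ hw j) (mem_univ i)) (Fintype.sum_nonneg hw))

theorem sum_div_sum_support_eq_one (hw : 0 ≤ w) (hw₀ : w ≠ 0) :
    ∑ i with w i ≠ 0, w i / ∑ j, w j = 1 := by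
  rw [← sum_div, sum_filter_ne_zero,
    div_self ((Fintype.sum_eq_zero_iff_of_nonneg hw).not.2 hw₀)]

theorem sum_negMulLog_div_sum_eq_sum_support :
    ∑ i, negMulLog (w i / ∑ j, w j) = ∑ i with w i ≠ 0, negMulLog (w i / ∑ j, w j) :=
  (sum_filter_of_ne (p := fun i ↦ w i ≠ 0) fun i _ h hi ↦ h (by simp [hi])).symm

theorem sum_negMulLog_div_sum_le_log_card_support (hw : 0 ≤ w) (hw₀ : w ≠ 0) :
    ∑ i, negMulLog (w i / ∑ j, w j) ≤ log #{i | w i ≠ 0} := by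
  rw [sum_negMulLog_div_sum_eq_sum_support]
  exact sum_negMulLog_le_log_card (fun i _ ↦ div_nonneg (hw i) (Fintype.sum_nonneg hw))
    (sum_div_sum_support_eq_one hw hw₀)

theorem sum_negMulLog_div_sum_eq_log_card_support_iff (hw : 0 ≤ w) (hw₀ : w ≠ 0) :
    ∑ i, negMulLog (w i / ∑ j, w j) = log #{i | w i ≠ 0} ↔
      ∀ i j, w i ≠ 0 → w j ≠ 0 → w i = w j := by
  rw [sum_negMulLog_div_sum_eq_sum_support, sum_negMulLog_eq_log_card_iff
    (fun i _ ↦ div_nonneg (hw i) (Fintype.sum_nonneg hw)) (sum_div_sum_support_eq_one hw hw₀)]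
  have hW : ∑ j, w j ≠ 0 := (Fintype.sum_eq_zero_iff_of_nonneg hw).not.2 hw₀
  simp only [mem_filter, mem_univ, true_and, div_left_inj' hW]
  exact ⟨fun h i j hi hj ↦ h i hi j hj, fun h i hi j hj ↦ h i j hi hj⟩

end Weights

end Real

section SingularValues

variable {M N : ℕ} (K : Matrix (Fin M) (Fin N) ℝ)

theorem svals_nonneg : 0 ≤ svals K := fun _ ↦ Real.sqrt_nonneg _

theorem svals_eq_zero_iff_eigenvalues_eq_zero (i : Fin N) :
    svals K i = 0 ↔ (isHermitian_conjTranspose_mul_self K).eigenvalues i = 0 :=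
  Real.sqrt_eq_zero (eigenvalues_conjTranspose_mul_self_nonneg K i)

theorem svals_eq_zero_iff : svals K = 0 ↔ K = 0 := by
  rw [← conjTranspose_mul_self_eq_zero,
    ← (isHermitian_conjTranspose_mul_self K).eigenvalues_eq_zero_iff, funext_iff, funext_iff]
  exact forall_congr' (svals_eq_zero_iff_eigenvalues_eq_zero K)

theorem rank_eq_card_svals_ne_zero : K.rank = #{i | svals K i ≠ 0} := by
  rw [← rank_conjTranspose_mul_self,
    (isHermitian_conjTranspose_mul_self K).rank_eq_card_non_zero_eigs, Fintype.card_subtype]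
  simp only [ne_eq, svals_eq_zero_iff_eigenvalues_eq_zero]

theorem eRank_eq_exp_sum_negMulLog :
    _root_.eRank K = Real.exp (∑ i, Real.negMulLog (svals K i / ∑ j, svals K j)) := by
  simp only [_root_.eRank, Real.negMulLog, neg_mul, sum_neg_distrib]

end SingularValues

/-- For a nonzero matrix `K`, `1 ≤ eRank(K) ≤ rank(K)`, with equality
`eRank(K) = rank(K)` iff all nonzero singular values of `K` are equal. -/
theorem eRank_between_one_and_rank {M N : ℕ}
    (K : Matrix (Fin M) (Fin N) ℝ) (hK : K ≠ 0) :
    1 ≤ _root_.eRank K ∧ _root_.eRank K ≤ (K.rank : ℝ) ∧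
      (_root_.eRank K = (K.rank : ℝ) ↔
        ∀ i j : Fin N, svals K i ≠ 0 → svals K j ≠ 0 → svals K i = svals K j) := by
  have hs := svals_nonneg K
  have hs₀ : svals K ≠ 0 := (svals_eq_zero_iff K).not.2 hK
  have hr : (0 : ℝ) < #{i | svals K i ≠ 0} := by
    obtain ⟨i, hi⟩ := Function.ne_iff.1 hs₀
    exact_mod_cast card_pos.2 ⟨i, by simpa using hi⟩
  rw [eRank_eq_exp_sum_negMulLog, rank_eq_card_svals_ne_zero, ← Real.exp_log hr, Real.exp_le_exp,
    Real.exp_eq_exp]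
  exact ⟨Real.one_le_exp (Real.sum_negMulLog_div_sum_nonneg hs),
    Real.sum_negMulLog_div_sum_le_log_card_support hs hs₀,
    Real.sum_negMulLog_div_sum_eq_log_card_support_iff hs hs₀⟩
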